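/- Let r be a positive integer and δ > 0. Let out be a random variable with values in {0,1}, let B₀,…,B_r be real-valued random variables, and let g : ℝ × ℝ × ℝ × {0,1} → {0,1} be any measurable function. Suppose X₀,…,X_r and G₀,…,G_r are random variables satisfying: X₀ = 𝔼[out] (a constant), G₀ = 1, and for every i ∈ {1,…,r}, X_i = rnd_δ( 𝔼[ out | B_i, B_{i−1}, X_{i−1}, Σ_{ℓ=1}^{i−1}(X_ℓ − X_{ℓ−1})², G_{i−1} ] ) almost surely and G_i = g(B_i, B_{i−1}, X_i, G_{i−1}). Then X₀,…,X_r is an SoS-augmented 2δ-weak martingale: for every i ∈ {1,…,r}, |𝔼[X_i | X_{i−1}, Σ_{ℓ=1}^{i−1}(X_ℓ − X_{ℓ−1})²] − X_{i−1}| ≤ 2δ almost surely. -/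

import Mathlib

open MeasureTheory

/-!
Write `mᵢ = σ(X_{i-1}, Σ_{ℓ<i} (X_ℓ - X_{ℓ-1})²)` and `nᵢ` for the σ-algebra `X_i` is computed
from, so that `mᵢ ≤ nᵢ`. Rounding down gives `X_i ≤ 𝔼[out | nᵢ] ≤ X_i + δ`; conditioning on `mᵢ`
and using the tower property, `𝔼[X_i | mᵢ]` lies in `[𝔼[out | mᵢ] - δ, 𝔼[out | mᵢ]]`.
On the other hand `mᵢ` is generated, up to null sets, by functions of the previous history `n_{i-1}`
(the new sum of squares is the old one plus `(X_{i-1} - X_{i-2})²`), so the same sandwich for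
`X_{i-1}` and `𝔼[out | n_{i-1}]` passes to `𝔼[out | mᵢ] ∈ [X_{i-1}, X_{i-1} + δ]`
(for `i = 1`, `m₁` is trivial and `𝔼[out | m₁] = X₀`).
Together, `|𝔼[X_i | mᵢ] - X_{i-1}| ≤ δ ≤ 2δ`.
-/

noncomputable def roundDown (δ x : ℝ) : ℝ := δ * ⌊x / δ⌋

section Rounding

variable {δ : ℝ}

lemma mem_Icc_roundDown (hδ : 0 < δ) (x : ℝ) :
    x ∈ Set.Icc (roundDown δ x) (roundDown δ x + δ) := by
  have hx : δ * (x / δ) = x := mul_div_cancel₀ x hδ.ne'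
  have hlo : (⌊x / δ⌋ : ℝ) ≤ x / δ := Int.floor_le _
  have hhi : x / δ ≤ ⌊x / δ⌋ + 1 := (Int.lt_floor_add_one _).le
  constructor
  · calc roundDown δ x ≤ δ * (x / δ) := by unfold roundDown; gcongr
      _ = x := hx
  · calc x = δ * (x / δ) := hx.symm
      _ ≤ δ * (⌊x / δ⌋ + 1) := by gcongr
      _ = roundDown δ x + δ := by unfold roundDown; ring

lemma measurable_roundDown : Measurable (roundDown δ) := by
  unfold roundDown
  fun_prop

lemma ae_mem_Icc_of_ae_eq_roundDown {Ω : Type*} [MeasurableSpace Ω] {μ : Measure Ω}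
    (hδ : 0 < δ) {V Y : Ω → ℝ} (hV : V =ᵐ[μ] fun ω => roundDown δ (Y ω)) :
    ∀ᵐ ω ∂μ, Y ω ∈ Set.Icc (V ω) (V ω + δ) := by
  filter_upwards [hV] with ω hω
  rw [hω]
  exact mem_Icc_roundDown hδ (Y ω)

end Rounding

section CondExp

variable {Ω : Type*} {m n m0 : MeasurableSpace Ω} {μ : Measure Ω} [IsFiniteMeasure μ]
  {f g : Ω → ℝ} {c : ℝ}

lemma MeasureTheory.Integrable.of_ae_mem_Icc (hg : Integrable g μ) (hf : AEStronglyMeasurable f μ)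
    (hfg : ∀ᵐ ω ∂μ, g ω ∈ Set.Icc (f ω) (f ω + c)) : Integrable f μ := by
  refine (hg.abs.add (integrable_const c)).mono' hf ?_
  filter_upwards [hfg] with ω ⟨hlo, hhi⟩
  rw [Real.norm_eq_abs, abs_le]
  constructor <;> simp only [Pi.add_apply] <;> linarith [le_abs_self (g ω), neg_abs_le (g ω)]

lemma ae_condExp_mem_Icc_condExp_add (hm : m ≤ m0) (hf : Integrable f μ) (hg : Integrable g μ)
    (hfg : ∀ᵐ ω ∂μ, g ω ∈ Set.Icc (f ω) (f ω + c)) :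
    ∀ᵐ ω ∂μ, μ[g | m] ω ∈ Set.Icc (μ[f | m] ω) (μ[f | m] ω + c) := by
  have hlo : μ[f | m] ≤ᵐ[μ] μ[g | m] := condExp_mono hf hg (hfg.mono fun _ h => h.1)
  have hhi : μ[g | m] ≤ᵐ[μ] μ[f + fun _ => c | m] :=
    condExp_mono hg (hf.add (integrable_const c)) (hfg.mono fun _ h => h.2)
  have hadd : μ[f + fun _ => c | m] =ᵐ[μ] μ[f | m] + fun _ => c := by
    simpa only [condExp_const hm] using condExp_add hf (integrable_const c) m
  filter_upwards [hlo, hhi, hadd] with ω hlo hhi hadd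
  exact ⟨hlo, hhi.trans_eq hadd⟩

lemma ae_condExp_mem_Icc_of_stronglyMeasurable (hm : m ≤ m0) {W : Ω → ℝ}
    (hW : StronglyMeasurable[m] W) (hg : Integrable g μ)
    (hWg : ∀ᵐ ω ∂μ, g ω ∈ Set.Icc (W ω) (W ω + c)) :
    ∀ᵐ ω ∂μ, μ[g | m] ω ∈ Set.Icc (W ω) (W ω + c) := by
  have hWi : Integrable W μ := hg.of_ae_mem_Icc (hW.mono hm).aestronglyMeasurable hWg
  simpa only [condExp_of_stronglyMeasurable hm hW hWi] using
    ae_condExp_mem_Icc_condExp_add hm hWi hg hWg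

lemma condExp_condExp_comap_of_ae_eq {β : Type*} [MeasurableSpace β] (hn : n ≤ m0)
    {φ ψ : Ω → β} (hφ : Measurable φ) (hψ : Measurable[n] ψ) (hφψ : φ =ᵐ[μ] ψ)
    (hf : Integrable f μ) :
    μ[μ[f | n] | MeasurableSpace.comap φ inferInstance] =ᵐ[μ]
      μ[f | MeasurableSpace.comap φ inferInstance] := by
  refine (ae_eq_condExp_of_forall_setIntegral_eq hφ.comap_le integrable_condExp
    (fun _ _ _ => integrable_condExp.integrableOn) ?_
    stronglyMeasurable_condExp.aestronglyMeasurable).symm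
  rintro _ ⟨A, hA, rfl⟩ -
  have hst : φ ⁻¹' A =ᵐ[μ] ψ ⁻¹' A := hφψ.preimage A
  calc ∫ ω in φ ⁻¹' A, μ[f | MeasurableSpace.comap φ inferInstance] ω ∂μ
      = ∫ ω in φ ⁻¹' A, f ω ∂μ := setIntegral_condExp hφ.comap_le hf ⟨A, hA, rfl⟩
    _ = ∫ ω in ψ ⁻¹' A, f ω ∂μ := setIntegral_congr_set hst
    _ = ∫ ω in ψ ⁻¹' A, μ[f | n] ω ∂μ := (setIntegral_condExp hn hf (hψ hA)).symm
    _ = ∫ ω in φ ⁻¹' A, μ[f | n] ω ∂μ := setIntegral_congr_set hst.symm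

lemma ae_abs_condExp_sub_le (hmn : m ≤ n) (hn : n ≤ m0) {V W : Ω → ℝ}
    (hV : AEStronglyMeasurable V μ)
    (hVf : ∀ᵐ ω ∂μ, μ[f | n] ω ∈ Set.Icc (V ω) (V ω + c))
    (hWf : ∀ᵐ ω ∂μ, μ[f | m] ω ∈ Set.Icc (W ω) (W ω + c)) :
    ∀ᵐ ω ∂μ, |μ[V | m] ω - W ω| ≤ c := by
  have hVi : Integrable V μ := integrable_condExp.of_ae_mem_Icc hV hVf
  filter_upwards [ae_condExp_mem_Icc_condExp_add (hmn.trans hn) hVi integrable_condExp hVf,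
    condExp_condExp_of_le (f := f) hmn hn, hWf] with ω ⟨hlo, hhi⟩ htower ⟨hWlo, hWhi⟩
  rw [htower] at hlo hhi
  rw [abs_le]
  constructor <;> linarith

end CondExp

section Game

variable {Ω : Type*} {B X : ℕ → Ω → ℝ} {G : ℕ → Ω → Bool}

def sumSqIncr (X : ℕ → Ω → ℝ) (k : ℕ) (ω : Ω) : ℝ :=
  ∑ ℓ ∈ Finset.Icc 1 k, (X ℓ ω - X (ℓ - 1) ω) ^ 2

lemma sumSqIncr_zero : sumSqIncr X 0 = 0 := by
  funext ω
  simp [sumSqIncr]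

lemma sumSqIncr_succ (k : ℕ) (ω : Ω) :
    sumSqIncr X (k + 1) ω = sumSqIncr X k ω + (X (k + 1) ω - X k ω) ^ 2 :=
  Finset.sum_Icc_succ_top (by omega) _

variable [MeasurableSpace Ω]

lemma measurable_sumSqIncr (hX : ∀ i, Measurable (X i)) (k : ℕ) : Measurable (sumSqIncr X k) :=
  Finset.measurable_sum _ fun ℓ _ => ((hX ℓ).sub (hX (ℓ - 1))).pow_const 2

def history (B X : ℕ → Ω → ℝ) (G : ℕ → Ω → Bool) (k : ℕ) (ω : Ω) : ℝ × ℝ × ℝ × ℝ × Bool :=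
  (B (k + 1) ω, B k ω, X k ω, sumSqIncr X k ω, G k ω)

abbrev historySigma (B X : ℕ → Ω → ℝ) (G : ℕ → Ω → Bool) (k : ℕ) : MeasurableSpace Ω :=
  MeasurableSpace.comap (history B X G k) inferInstance

lemma measurable_history (hB : ∀ i, Measurable (B i)) (hX : ∀ i, Measurable (X i))
    (hG : ∀ i, Measurable (G i)) (k : ℕ) : Measurable (history B X G k) :=
  (hB _).prodMk ((hB _).prodMk ((hX _).prodMk ((measurable_sumSqIncr hX _).prodMk (hG _))))

lemma condExp_comap_value_mem_Icc {μ : Measure Ω} [IsProbabilityMeasure μ] {δ : ℝ}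
    {out : Ω → ℝ} (hδ : 0 < δ) (hout : Integrable out μ)
    (hB : ∀ i, Measurable (B i)) (hX : ∀ i, Measurable (X i)) (hG : ∀ i, Measurable (G i))
    (hX0 : X 0 = fun _ => ∫ ω, out ω ∂μ)
    {r : ℕ} (hXdef : ∀ k < r, X (k + 1) =ᵐ[μ]
      fun ω => roundDown δ (μ[out | historySigma B X G k] ω))
    {k : ℕ} (hk : k ≤ r) :
    ∀ᵐ ω ∂μ, μ[out | MeasurableSpace.comap (fun ω => (X k ω, sumSqIncr X k ω)) inferInstance] ω
      ∈ Set.Icc (X k ω) (X k ω + δ) := by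
  cases k with
  | zero =>
    have hconst : (fun ω => (X 0 ω, sumSqIncr X 0 ω)) = fun _ => (∫ ω, out ω ∂μ, (0 : ℝ)) := by
      rw [hX0, sumSqIncr_zero]
      rfl
    rw [hconst, MeasurableSpace.comap_const, condExp_bot, hX0]
    filter_upwards with ω
    simp [hδ.le]
  | succ j =>
    have hhist : Measurable[historySigma B X G j] (history B X G j) := comap_measurable _
    set R := fun ω => roundDown δ (μ[out | historySigma B X G j] ω)
    have hR : Measurable[historySigma B X G j] R :=
      measurable_roundDown.comp stronglyMeasurable_condExp.measurable
    have hφ : Measurable fun ω => (X (j + 1) ω, sumSqIncr X (j + 1) ω) :=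
      (hX _).prodMk (measurable_sumSqIncr hX _)
    have hψ : Measurable[historySigma B X G j]
        fun ω => (R ω, sumSqIncr X j ω + (R ω - X j ω) ^ 2) :=
      hR.prodMk (hhist.snd.snd.snd.fst.add ((hR.sub hhist.snd.snd.fst).pow_const 2))
    have hφψ : (fun ω => (X (j + 1) ω, sumSqIncr X (j + 1) ω)) =ᵐ[μ]
        fun ω => (R ω, sumSqIncr X j ω + (R ω - X j ω) ^ 2) := by
      filter_upwards [hXdef j hk] with ω hω
      rw [sumSqIncr_succ, hω]
    filter_upwards [condExp_condExp_comap_of_ae_eq (measurable_history hB hX hG j).comap_le hφ hψ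
      hφψ hout, ae_condExp_mem_Icc_of_stronglyMeasurable hφ.comap_le
      (comap_measurable _).fst.stronglyMeasurable integrable_condExp
      (ae_mem_Icc_of_ae_eq_roundDown hδ (hXdef j hk))] with ω htower hmem
    rwa [← htower]

end Game

theorem game_value_sequence_is_sos_augmented_weak_martingale
    {Ω : Type*} [MeasurableSpace Ω] (μ : Measure Ω) [IsProbabilityMeasure μ]
    (r : ℕ) (δ : ℝ) (hδ : 0 < δ)
    (out : Ω → ℝ) (hout : Measurable out)
    (hout01 : ∀ ω, out ω = 0 ∨ out ω = 1)
    (B : ℕ → Ω → ℝ) (hB : ∀ i, Measurable (B i))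
    (X : ℕ → Ω → ℝ) (hX : ∀ i, Measurable (X i))
    (G : ℕ → Ω → Bool) (hG : ∀ i, Measurable (G i))
    (hX0 : X 0 = fun _ => ∫ ω, out ω ∂μ)
    (hXdef : ∀ i, 1 ≤ i → i ≤ r → ∀ᵐ ω ∂μ,
      X i ω = δ * (⌊(μ[out | MeasurableSpace.comap
          (fun ω => (B i ω, B (i - 1) ω, X (i - 1) ω,
            ∑ ℓ ∈ Finset.Icc 1 (i - 1), (X ℓ ω - X (ℓ - 1) ω) ^ 2,
            G (i - 1) ω))
          inferInstance]) ω / δ⌋ : ℝ)) :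
    ∀ i, 1 ≤ i → i ≤ r → ∀ᵐ ω ∂μ,
      |(μ[X i | MeasurableSpace.comap
          (fun ω => (X (i - 1) ω,
            ∑ ℓ ∈ Finset.Icc 1 (i - 1), (X ℓ ω - X (ℓ - 1) ω) ^ 2))
          inferInstance]) ω - X (i - 1) ω| ≤ 2 * δ := by
  intro i hi hir
  obtain ⟨k, rfl⟩ : ∃ k, i = k + 1 := ⟨i - 1, by omega⟩
  have hout_int : Integrable out μ := .of_bound hout.aestronglyMeasurable 1 <| .of_forall
    fun ω => by rcases hout01 ω with h | h <;> simp [h]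
  have hXdef' : ∀ j < r, X (j + 1) =ᵐ[μ]
      fun ω => roundDown δ (μ[out | historySigma B X G j] ω) :=
    fun j hj => hXdef (j + 1) (by omega) hj
  have hmn : MeasurableSpace.comap (fun ω => (X k ω, sumSqIncr X k ω)) inferInstance ≤
      historySigma B X G k :=
    (comap_measurable (history B X G k)).snd.snd.fst.prodMk
      (comap_measurable (history B X G k)).snd.snd.snd.fst |>.comap_le
  filter_upwards [ae_abs_condExp_sub_le hmn (measurable_history hB hX hG k).comap_le
    (hX _).aestronglyMeasurable (ae_mem_Icc_of_ae_eq_roundDown hδ (hXdef' k hir))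
    (condExp_comap_value_mem_Icc hδ hout_int hB hX hG hX0 hXdef' (by omega))] with ω hω
  exact hω.trans (by linarith)
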